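/- Let ζ ∈ ℂ be a complex number that is not a Gaussian rational. Set c₀ := [ζ] and z := ζ - c₀ ∈ 𝔉. Then T^{n}(z) ≠ 0 for every n ≥ 0, so the HCF partial quotients c_n := a_n(z) are defined for all n ≥ 1; let (p_n, q_n) be the continuant sequences of (c₀, c₁, c₂, ...). Then for every n ≥ 1, q_n ≠ 0 and (2/(2+√2)) · 1/(|q_n|²·(|c_{n+1}| + √2/2)) ≤ |ζ - p_n/q_n| ≤ (4/(2-√2)) · 1/(|c_{n+1}|·|q_n|²). -/

import Mathlib

open Complex

/-- The nearest Gaussian integer to a complex number, as a complex number. -/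
noncomputable def nearestGaussian (z : ℂ) : ℂ :=
  (⌊z.re + 1 / 2⌋ : ℤ) + (⌊z.im + 1 / 2⌋ : ℤ) * I

/-- The complex Gauss map on the fundamental domain. -/
noncomputable def gaussT (z : ℂ) : ℂ :=
  if z = 0 then 0 else z⁻¹ - nearestGaussian z⁻¹

/-- A Gaussian rational is a quotient of two Gaussian integers. -/
def IsGaussianRational (z : ℂ) : Prop :=
  ∃ p q : GaussianInt, q ≠ 0 ∧ z = (p : ℂ) / (q : ℂ)

/-- Continuant numerators: `contNum c (j+1)` is `p_j`, with `contNum c 0 = p_{-1} = 1`. -/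
noncomputable def contNum (c : ℕ → ℂ) : ℕ → ℂ
  | 0 => 1
  | 1 => c 0
  | n + 2 => c (n + 1) * contNum c (n + 1) + contNum c n

/-- Continuant denominators: `contDen c (j+1)` is `q_j`, with `contDen c 0 = q_{-1} = 0`. -/
noncomputable def contDen (c : ℕ → ℂ) : ℕ → ℂ
  | 0 => 0
  | 1 => 1
  | n + 2 => c (n + 1) * contDen c (n + 1) + contDen c n

/-!
Write `x n = T^n z`, so that `1 / x n = c (n + 1) + x (n + 1)` with `x n` in the closed square
`|Re|, |Im| ≤ 1/2`. By induction `ζ (q_n + x_n q_{n-1}) = p_n + x_n p_{n-1}`, and with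
`p_{n-1} q_n - p_n q_{n-1} = ±1` this gives
`|ζ - p_n / q_n| = |x_n| / (|q_n| |q_n + x_n q_{n-1}|)`. The bounds then follow from
`|x_n| ≤ √2/2`, `|x_n| |c_{n+1} + x_{n+1}| = 1`, `|c_{n+1}| ≥ √2` and Hurwitz's theorem that
`|q_n|` is nondecreasing.

For the monotonicity, a partial quotient `s` with `|s| ≥ 2` is handled by the triangle inequality;
the only other possibility is `N(s) = 2`, since `N(s) ∈ {0, 1}` is incompatible with
`|1/x - s| < 1` for `x` in the square. For norm `2` one proves simultaneously that
`|q_m| ≤ |q_{m-1} + v q_m|` for every Gaussian integer `v` of norm `2` with `|1/x_m - v| < 1`;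
this propagates from `m` to `m + 1` through `v ↦ c_{m+1} + v̄` and the identity
`N(a + v b) - N(b) = N(b + v̄ a) - N(a)`, valid when `N(v) = 2`.
-/

open ComplexConjugate

lemma isGaussianRational_zero : IsGaussianRational 0 :=
  ⟨0, 1, one_ne_zero, by simp⟩

lemma IsGaussianRational.add_coe {w : ℂ} (hw : IsGaussianRational w) (g : GaussianInt) :
    IsGaussianRational (w + g) := by
  obtain ⟨p, q, hq, rfl⟩ := hw
  have hq' : (q : ℂ) ≠ 0 := by rwa [Ne, GaussianInt.toComplex_eq_zero]
  refine ⟨p + g * q, q, hq, ?_⟩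
  rw [GaussianInt.toComplex_add, GaussianInt.toComplex_mul]
  field_simp

lemma IsGaussianRational.inv {w : ℂ} (hw : IsGaussianRational w) : IsGaussianRational w⁻¹ := by
  obtain ⟨p, q, hq, rfl⟩ := hw
  by_cases hp : p = 0
  · simpa [hp] using isGaussianRational_zero
  · exact ⟨q, p, hp, inv_div _ _⟩

lemma nearestGaussian_re (w : ℂ) : (nearestGaussian w).re = ⌊w.re + 1 / 2⌋ := by
  simp [nearestGaussian]

lemma nearestGaussian_im (w : ℂ) : (nearestGaussian w).im = ⌊w.im + 1 / 2⌋ := by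
  simp [nearestGaussian]

lemma exists_nearestGaussian_eq_coe (w : ℂ) : ∃ g : GaussianInt, nearestGaussian w = g :=
  ⟨⟨⌊w.re + 1 / 2⌋, ⌊w.im + 1 / 2⌋⟩, (GaussianInt.toComplex_def' _ _).symm⟩

lemma abs_re_sub_nearestGaussian_le (w : ℂ) : |(w - nearestGaussian w).re| ≤ 1 / 2 := by
  rw [sub_re, nearestGaussian_re, abs_le]
  constructor <;> linarith [Int.floor_le (w.re + 1 / 2), Int.lt_floor_add_one (w.re + 1 / 2)]

lemma abs_im_sub_nearestGaussian_le (w : ℂ) : |(w - nearestGaussian w).im| ≤ 1 / 2 := by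
  rw [sub_im, nearestGaussian_im, abs_le]
  constructor <;> linarith [Int.floor_le (w.im + 1 / 2), Int.lt_floor_add_one (w.im + 1 / 2)]

lemma gaussT_of_ne_zero {w : ℂ} (hw : w ≠ 0) : gaussT w = w⁻¹ - nearestGaussian w⁻¹ :=
  if_neg hw

lemma not_isGaussianRational_gaussT {w : ℂ} (hw : ¬IsGaussianRational w) :
    ¬IsGaussianRational (gaussT w) := by
  have hw0 : w ≠ 0 := by rintro rfl; exact hw isGaussianRational_zero
  intro hT
  obtain ⟨g, hg⟩ := exists_nearestGaussian_eq_coe w⁻¹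
  rw [gaussT_of_ne_zero hw0, hg] at hT
  exact hw (by simpa using (hT.add_coe g).inv)

lemma iterate_gaussT_ne_zero {w : ℂ} (hw : ¬IsGaussianRational w) (n : ℕ) :
    gaussT^[n] w ≠ 0 := by
  have hirr : ¬IsGaussianRational (gaussT^[n] w) := by
    induction n with
    | zero => exact hw
    | succ n ih => rw [Function.iterate_succ_apply']; exact not_isGaussianRational_gaussT ih
  rintro h
  exact hirr (h ▸ isGaussianRational_zero)

lemma sqrt_two_lt_two : √2 < 2 :=
  (Real.sqrt_lt' two_pos).mpr (by norm_num)

lemma normSq_le_half {u : ℂ} (hre : |u.re| ≤ 1 / 2) (him : |u.im| ≤ 1 / 2) :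
    normSq u ≤ 1 / 2 := by
  rw [normSq_apply]
  nlinarith [abs_mul_abs_self u.re, abs_mul_abs_self u.im, abs_nonneg u.re, abs_nonneg u.im]

lemma norm_le_sqrt_two_div_two {u : ℂ} (hre : |u.re| ≤ 1 / 2) (him : |u.im| ≤ 1 / 2) :
    ‖u‖ ≤ √2 / 2 := by
  have h2 : (√2 / 2) ^ 2 = 1 / 2 := by rw [div_pow, Real.sq_sqrt zero_le_two]; norm_num
  refine le_of_sq_le_sq ?_ (by positivity)
  rw [Complex.sq_norm, h2]
  exact normSq_le_half hre him

lemma norm_inv_sub_lt_one_iff {z : ℂ} (hz : z ≠ 0) (v : ℂ) :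
    ‖z⁻¹ - v‖ < 1 ↔ 1 + normSq v * normSq z - 2 * (v * z).re < normSq z := by
  have hsplit : z⁻¹ - v = (1 - v * z) / z := by field_simp
  rw [hsplit, norm_div, div_lt_one (norm_pos_iff.mpr hz),
    ← pow_lt_pow_iff_left₀ (norm_nonneg _) (norm_nonneg _) two_ne_zero,
    Complex.sq_norm, Complex.sq_norm, normSq_sub, normSq_one, normSq_mul, map_mul, one_mul]
  have hre : (conj v * conj z).re = (v * z).re := by rw [← map_mul, conj_re]
  rw [hre]

lemma normSq_coe_gaussianInt (g : GaussianInt) :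
    normSq (g : ℂ) = ((g.re ^ 2 + g.im ^ 2 : ℤ) : ℝ) := by
  rw [normSq_apply, ← GaussianInt.intCast_re, ← GaussianInt.intCast_im]; push_cast; ring

lemma re_coe_mul_le_half_normSq {z : ℂ} (hre : |z.re| ≤ 1 / 2) (him : |z.im| ≤ 1 / 2)
    (g : GaussianInt) : ((g : ℂ) * z).re ≤ normSq (g : ℂ) / 2 := by
  have ha : |(g.re : ℝ)| ≤ (g.re : ℝ) ^ 2 := by
    exact_mod_cast (Int.natCast_natAbs g.re ▸ Int.natAbs_le_self_sq g.re)
  have hb : |(g.im : ℝ)| ≤ (g.im : ℝ) ^ 2 := by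
    exact_mod_cast (Int.natCast_natAbs g.im ▸ Int.natAbs_le_self_sq g.im)
  rw [mul_re, ← GaussianInt.intCast_re, ← GaussianInt.intCast_im, normSq_coe_gaussianInt]
  push_cast
  calc (g.re : ℝ) * z.re - g.im * z.im ≤ |(g.re : ℝ)| * |z.re| + |(g.im : ℝ)| * |z.im| := by
        rw [← abs_mul, ← abs_mul]
        linarith [le_abs_self ((g.re : ℝ) * z.re), neg_abs_le ((g.im : ℝ) * z.im)]
    _ ≤ |(g.re : ℝ)| * (1 / 2) + |(g.im : ℝ)| * (1 / 2) := by gcongr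
    _ ≤ ((g.re : ℝ) ^ 2 + (g.im : ℝ) ^ 2) / 2 := by linarith

lemma two_le_normSq_of_norm_inv_sub_lt_one {z : ℂ} (hz : z ≠ 0) (hre : |z.re| ≤ 1 / 2)
    (him : |z.im| ≤ 1 / 2) (g : GaussianInt) (hg : ‖z⁻¹ - g‖ < 1) :
    2 ≤ normSq (g : ℂ) := by
  rw [norm_inv_sub_lt_one_iff hz] at hg
  have hgz := re_coe_mul_le_half_normSq hre him g
  by_contra hlt
  have hN1 : normSq (g : ℂ) ≤ 1 := by
    rw [normSq_coe_gaussianInt] at hlt ⊢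
    have : g.re ^ 2 + g.im ^ 2 < 2 := by exact_mod_cast not_le.mp hlt
    exact_mod_cast (by omega : g.re ^ 2 + g.im ^ 2 ≤ 1)
  nlinarith [normSq_le_half hre him, normSq_nonneg z]

lemma norm_sub_conj_lt_one_of_norm_inv_sub_lt_one {z v : ℂ} (hz : z ≠ 0) (hv : normSq v = 2)
    (h : ‖z⁻¹ - v‖ < 1) : ‖z - conj v‖ < 1 := by
  rw [norm_inv_sub_lt_one_iff hz, hv] at h
  have hsq : normSq (z - conj v) < 1 := by
    rw [normSq_sub, normSq_conj, conj_conj, hv, mul_comm z v]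
    linarith
  rw [← Complex.sq_norm] at hsq
  nlinarith [norm_nonneg (z - conj v)]

lemma normSq_add_mul_sub_normSq {v : ℂ} (hv : normSq v = 2) (a b : ℂ) :
    normSq (a + v * b) - normSq b = normSq (b + conj v * a) - normSq a := by
  have hcross : (a * conj (v * b)).re = (b * conj (conj v * a)).re := by
    rw [← conj_re (b * _)]
    simp only [map_mul, conj_conj]
    ring_nf
  rw [normSq_add, normSq_add, normSq_mul, normSq_mul, normSq_conj, hv, hcross]
  ring

lemma normSq_eq_two_or_two_le_norm (g : GaussianInt) (hg : 2 ≤ normSq (g : ℂ)) :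
    normSq (g : ℂ) = 2 ∨ 2 ≤ ‖(g : ℂ)‖ := by
  rw [normSq_coe_gaussianInt] at hg ⊢
  rcases lt_or_ge (g.re ^ 2 + g.im ^ 2) 4 with h4 | h4
  · left
    have hre : -1 ≤ g.re ∧ g.re ≤ 1 := by constructor <;> nlinarith [sq_nonneg g.im]
    have him : -1 ≤ g.im ∧ g.im ≤ 1 := by constructor <;> nlinarith [sq_nonneg g.re]
    have hg' : 2 ≤ g.re ^ 2 + g.im ^ 2 := by exact_mod_cast hg
    exact_mod_cast (by nlinarith : g.re ^ 2 + g.im ^ 2 = 2)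
  · right
    have h4' : (2 : ℝ) ^ 2 ≤ ‖(g : ℂ)‖ ^ 2 := by
      rw [Complex.sq_norm, normSq_coe_gaussianInt]
      exact_mod_cast (by linarith : (2 : ℤ) ^ 2 ≤ _)
    exact le_of_sq_le_sq h4' (norm_nonneg _)

lemma norm_le_norm_add_mul {𝕜 : Type*} [NormedDivisionRing 𝕜] {a b s : 𝕜}
    (hs : 2 ≤ ‖s‖) (hab : ‖a‖ ≤ ‖b‖) : ‖b‖ ≤ ‖a + s * b‖ := by
  have htri : ‖s * b‖ ≤ ‖a + s * b‖ + ‖a‖ := by simpa using norm_sub_le (a + s * b) a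
  rw [norm_mul] at htri
  nlinarith [norm_nonneg b]

lemma contNum_mul_contDen_sub (c : ℕ → ℂ) (n : ℕ) :
    contNum c n * contDen c (n + 1) - contNum c (n + 1) * contDen c n = (-1) ^ n := by
  induction n with
  | zero => simp [contNum, contDen]
  | succ n ih =>
    simp only [contNum, contDen, pow_succ]
    linear_combination -ih

/-- `x n` and `c (n + 1)` play the roles of `T^n z` and `a_{n+1}(z)`. -/
structure IsHurwitzExpansion (x c : ℕ → ℂ) : Prop where
  ne_zero : ∀ n, x n ≠ 0
  abs_re_le : ∀ n, |(x n).re| ≤ 1 / 2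
  abs_im_le : ∀ n, |(x n).im| ≤ 1 / 2
  exists_coe : ∀ n, ∃ g : GaussianInt, c (n + 1) = g
  inv_eq : ∀ n, (x n)⁻¹ = c (n + 1) + x (n + 1)

def HurwitzBound (x c : ℕ → ℂ) (m : ℕ) : Prop :=
  ∀ v : GaussianInt, normSq (v : ℂ) = 2 → ‖(x m)⁻¹ - v‖ < 1 →
    ‖contDen c (m + 1)‖ ≤ ‖contDen c m + v * contDen c (m + 1)‖

namespace IsHurwitzExpansion

variable {x c : ℕ → ℂ}

lemma norm_le (h : IsHurwitzExpansion x c) (n : ℕ) : ‖x n‖ ≤ √2 / 2 :=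
  norm_le_sqrt_two_div_two (h.abs_re_le n) (h.abs_im_le n)

lemma two_le_normSq_of_norm_inv_sub_lt_one (h : IsHurwitzExpansion x c) {n : ℕ}
    (g : GaussianInt) (hg : ‖(x n)⁻¹ - g‖ < 1) : 2 ≤ normSq (g : ℂ) :=
  _root_.two_le_normSq_of_norm_inv_sub_lt_one (h.ne_zero n) (h.abs_re_le n) (h.abs_im_le n) g hg

lemma mul_add_eq_one (h : IsHurwitzExpansion x c) (n : ℕ) :
    x n * (c (n + 1) + x (n + 1)) = 1 := by
  rw [← h.inv_eq n, mul_inv_cancel₀ (h.ne_zero n)]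

lemma norm_inv_sub_lt_one (h : IsHurwitzExpansion x c) (n : ℕ) :
    ‖(x n)⁻¹ - c (n + 1)‖ < 1 := by
  rw [h.inv_eq n, add_sub_cancel_left]
  linarith [h.norm_le (n + 1), sqrt_two_lt_two]

lemma sqrt_two_le_norm (h : IsHurwitzExpansion x c) (n : ℕ) : √2 ≤ ‖c (n + 1)‖ := by
  obtain ⟨g, hg⟩ := h.exists_coe n
  have h2 := h.two_le_normSq_of_norm_inv_sub_lt_one g (hg ▸ h.norm_inv_sub_lt_one n)
  rw [hg, Complex.norm_def]
  exact Real.sqrt_le_sqrt h2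

lemma norm_contDen_le_of_norm_inv_sub_lt_one (h : IsHurwitzExpansion x c) {m : ℕ}
    (hcross : HurwitzBound x c m) (hmono : ‖contDen c m‖ ≤ ‖contDen c (m + 1)‖)
    (s : GaussianInt) (hs : ‖(x m)⁻¹ - s‖ < 1) :
    ‖contDen c (m + 1)‖ ≤ ‖contDen c m + s * contDen c (m + 1)‖ := by
  rcases normSq_eq_two_or_two_le_norm s (h.two_le_normSq_of_norm_inv_sub_lt_one s hs) with h2 | h2
  · exact hcross s h2 hs
  · exact norm_le_norm_add_mul h2 hmono

lemma hurwitzBound_and_norm_contDen_le_succ (h : IsHurwitzExpansion x c) (m : ℕ) :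
    HurwitzBound x c m ∧ ‖contDen c m‖ ≤ ‖contDen c (m + 1)‖ := by
  induction m with
  | zero =>
    refine ⟨fun v hv _ => ?_, by simp [contDen]⟩
    simp only [contDen, zero_add, mul_one, norm_one, Complex.norm_def, hv]
    exact Real.one_le_sqrt.mpr one_le_two
  | succ m ih =>
    obtain ⟨hcross, hmono⟩ := ih
    obtain ⟨g, hg⟩ := h.exists_coe m
    have hQ : contDen c (m + 1 + 1) = contDen c m + c (m + 1) * contDen c (m + 1) := by
      rw [contDen, add_comm]
    refine ⟨fun v hv hnear => ?_, ?_⟩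
    -- `g + v̄` is a Gaussian integer near `1 / x m`, and the exchange identity moves the bound up.
    · have hnear' : ‖(x m)⁻¹ - ↑(g + star v)‖ < 1 := by
        rw [GaussianInt.toComplex_add, GaussianInt.toComplex_star, h.inv_eq m, ← hg,
          add_sub_add_left_eq_sub]
        exact norm_sub_conj_lt_one_of_norm_inv_sub_lt_one (h.ne_zero (m + 1)) hv hnear
      have hle := h.norm_contDen_le_of_norm_inv_sub_lt_one hcross hmono _ hnear'
      have hexch := normSq_add_mul_sub_normSq hv (contDen c (m + 1)) (contDen c (m + 1 + 1))
      rw [show contDen c (m + 1 + 1) + conj ↑v * contDen c (m + 1)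
          = contDen c m + ↑(g + star v) * contDen c (m + 1) by
        rw [hQ, GaussianInt.toComplex_add, GaussianInt.toComplex_star, ← hg]; ring] at hexch
      rw [← sq_le_sq₀ (norm_nonneg _) (norm_nonneg _), Complex.sq_norm, Complex.sq_norm]
        at hle ⊢
      linarith
    · rw [hQ, hg]
      exact h.norm_contDen_le_of_norm_inv_sub_lt_one hcross hmono g (hg ▸ h.norm_inv_sub_lt_one m)

lemma norm_contDen_le_succ (h : IsHurwitzExpansion x c) (n : ℕ) :
    ‖contDen c n‖ ≤ ‖contDen c (n + 1)‖ :=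
  (h.hurwitzBound_and_norm_contDen_le_succ n).2

lemma one_le_norm_contDen (h : IsHurwitzExpansion x c) (n : ℕ) :
    1 ≤ ‖contDen c (n + 1)‖ := by
  induction n with
  | zero => simp [contDen]
  | succ n ih => exact ih.trans (h.norm_contDen_le_succ _)

lemma contDen_ne_zero (h : IsHurwitzExpansion x c) (n : ℕ) : contDen c (n + 1) ≠ 0 :=
  norm_pos_iff.mp (one_pos.trans_le (h.one_le_norm_contDen n))

lemma mul_contDen_add_mul_eq (h : IsHurwitzExpansion x c) {ζ : ℂ} (hζ : ζ = c 0 + x 0)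
    (n : ℕ) :
    ζ * (contDen c (n + 1) + x n * contDen c n) = contNum c (n + 1) + x n * contNum c n := by
  induction n with
  | zero => simp [contNum, contDen, hζ]
  | succ n ih =>
    have hmul : x n * (ζ * (contDen c (n + 1 + 1) + x (n + 1) * contDen c (n + 1))
        - (contNum c (n + 1 + 1) + x (n + 1) * contNum c (n + 1))) = 0 := by
      simp only [contNum, contDen]
      linear_combination (ζ * contDen c (n + 1) - contNum c (n + 1)) * h.mul_add_eq_one n + ih
    exact sub_eq_zero.mp ((mul_eq_zero.mp hmul).resolve_left (h.ne_zero n))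

lemma norm_sub_div_mul_eq (h : IsHurwitzExpansion x c) {ζ : ℂ} (hζ : ζ = c 0 + x 0) (n : ℕ) :
    ‖ζ - contNum c (n + 1) / contDen c (n + 1)‖
      * (‖contDen c (n + 1)‖ * ‖contDen c (n + 1) + x n * contDen c n‖) = ‖x n‖ := by
  have hQ := h.contDen_ne_zero n
  have key : (ζ - contNum c (n + 1) / contDen c (n + 1))
      * (contDen c (n + 1) * (contDen c (n + 1) + x n * contDen c n)) = x n * (-1) ^ n := by
    rw [sub_mul, div_mul_eq_mul_div, mul_div_assoc, mul_div_cancel_left₀ _ hQ]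
    linear_combination contDen c (n + 1) * h.mul_contDen_add_mul_eq hζ n
      + x n * contNum_mul_contDen_sub c n
  simpa [norm_mul] using congrArg norm key

lemma norm_mul_contDen_le (h : IsHurwitzExpansion x c) (n : ℕ) :
    ‖x n * contDen c n‖ ≤ √2 / 2 * ‖contDen c (n + 1)‖ := by
  rw [norm_mul]
  exact mul_le_mul (h.norm_le n) (h.norm_contDen_le_succ n) (norm_nonneg _) (by positivity)

lemma norm_contDen_add_mul_le (h : IsHurwitzExpansion x c) (n : ℕ) :
    ‖contDen c (n + 1) + x n * contDen c n‖ ≤ (1 + √2 / 2) * ‖contDen c (n + 1)‖ := by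
  linarith [norm_add_le (contDen c (n + 1)) (x n * contDen c n), h.norm_mul_contDen_le n]

lemma le_norm_contDen_add_mul (h : IsHurwitzExpansion x c) (n : ℕ) :
    (1 - √2 / 2) * ‖contDen c (n + 1)‖ ≤ ‖contDen c (n + 1) + x n * contDen c n‖ := by
  have htri : ‖contDen c (n + 1)‖
      ≤ ‖contDen c (n + 1) + x n * contDen c n‖ + ‖x n * contDen c n‖ := by
    simpa using norm_sub_le (contDen c (n + 1) + x n * contDen c n) (x n * contDen c n)
  linarith [h.norm_mul_contDen_le n]

lemma norm_mul_norm_add_eq_one (h : IsHurwitzExpansion x c) (n : ℕ) :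
    ‖x n‖ * ‖c (n + 1) + x (n + 1)‖ = 1 := by
  rw [← norm_mul, h.mul_add_eq_one n, norm_one]

lemma one_le_norm_mul_norm_add (h : IsHurwitzExpansion x c) (n : ℕ) :
    1 ≤ ‖x n‖ * (‖c (n + 1)‖ + √2 / 2) := by
  rw [← h.norm_mul_norm_add_eq_one n]
  gcongr
  exact (norm_add_le _ _).trans (by linarith [h.norm_le (n + 1)])

lemma norm_mul_norm_le_two (h : IsHurwitzExpansion x c) (n : ℕ) :
    ‖x n‖ * ‖c (n + 1)‖ ≤ 2 := by
  have htri : ‖c (n + 1)‖ ≤ ‖c (n + 1) + x (n + 1)‖ + ‖x (n + 1)‖ := by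
    simpa using norm_sub_le (c (n + 1) + x (n + 1)) (x (n + 1))
  have hone := h.norm_mul_norm_add_eq_one n
  nlinarith [h.norm_le (n + 1), h.sqrt_two_le_norm n, norm_nonneg (x n)]

lemma le_norm_sub_contNum_div_contDen (h : IsHurwitzExpansion x c) {ζ : ℂ}
    (hζ : ζ = c 0 + x 0) (n : ℕ) :
    2 / (2 + √2) * (1 / (‖contDen c (n + 1)‖ ^ 2 * (‖c (n + 1)‖ + √2 / 2)))
      ≤ ‖ζ - contNum c (n + 1) / contDen c (n + 1)‖ := by
  have hEqd := h.norm_sub_div_mul_eq hζ n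
  have hd := h.norm_contDen_add_mul_le n
  have ht := h.one_le_norm_mul_norm_add n
  have hq := h.one_le_norm_contDen n
  set E := ‖ζ - contNum c (n + 1) / contDen c (n + 1)‖
  set q := ‖contDen c (n + 1)‖
  set a := ‖c (n + 1)‖
  set d := ‖contDen c (n + 1) + x n * contDen c n‖
  have hEqa : 0 ≤ E * q * (a + √2 / 2) := by positivity
  rw [div_mul_div_comm, mul_one, div_le_iff₀ (by positivity)]
  calc 2 ≤ 2 * (‖x n‖ * (a + √2 / 2)) := by linarith
    _ = E * q * (a + √2 / 2) * (2 * d) := by rw [← hEqd]; ring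
    _ ≤ E * q * (a + √2 / 2) * ((2 + √2) * q) :=
        mul_le_mul_of_nonneg_left (by linarith) hEqa
    _ = E * ((2 + √2) * (q ^ 2 * (a + √2 / 2))) := by ring

lemma norm_sub_contNum_div_contDen_le (h : IsHurwitzExpansion x c) {ζ : ℂ}
    (hζ : ζ = c 0 + x 0) (n : ℕ) :
    ‖ζ - contNum c (n + 1) / contDen c (n + 1)‖
      ≤ 4 / (2 - √2) * (1 / (‖c (n + 1)‖ * ‖contDen c (n + 1)‖ ^ 2)) := by
  have hEqd := h.norm_sub_div_mul_eq hζ n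
  have hd := h.le_norm_contDen_add_mul n
  have ht := h.norm_mul_norm_le_two n
  have hq := h.one_le_norm_contDen n
  have ha := h.sqrt_two_le_norm n
  set E := ‖ζ - contNum c (n + 1) / contDen c (n + 1)‖
  set q := ‖contDen c (n + 1)‖
  set a := ‖c (n + 1)‖
  have hs := sqrt_two_lt_two
  set d := ‖contDen c (n + 1) + x n * contDen c n‖
  have hpos : 0 < (2 - √2) * (a * q ^ 2) :=
    mul_pos (by linarith) (mul_pos (Real.sqrt_pos.mpr two_pos |>.trans_le ha) (by positivity))
  rw [div_mul_div_comm, mul_one, le_div_iff₀ hpos]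
  calc E * ((2 - √2) * (a * q ^ 2)) = 2 * (E * q * a) * ((1 - √2 / 2) * q) := by ring
    _ ≤ 2 * (E * q * a) * d := by gcongr
    _ = 2 * (‖x n‖ * a) := by rw [← hEqd]; ring
    _ ≤ 4 := by linarith

end IsHurwitzExpansion

lemma iterate_gaussT_succ {z : ℂ} {n : ℕ} (hz : gaussT^[n] z ≠ 0) :
    gaussT^[n + 1] z = (gaussT^[n] z)⁻¹ - nearestGaussian (gaussT^[n] z)⁻¹ := by
  rw [Function.iterate_succ_apply', gaussT_of_ne_zero hz]

lemma isHurwitzExpansion_iterate_gaussT {z : ℂ} (hre : |z.re| ≤ 1 / 2) (him : |z.im| ≤ 1 / 2)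
    (hz : ∀ n, gaussT^[n] z ≠ 0) {c : ℕ → ℂ}
    (hc : ∀ n, c (n + 1) = nearestGaussian (gaussT^[n] z)⁻¹) :
    IsHurwitzExpansion (fun n => gaussT^[n] z) c where
  ne_zero := hz
  abs_re_le
    | 0 => hre
    | n + 1 => by rw [iterate_gaussT_succ (hz n)]; exact abs_re_sub_nearestGaussian_le _
  abs_im_le
    | 0 => him
    | n + 1 => by rw [iterate_gaussT_succ (hz n)]; exact abs_im_sub_nearestGaussian_le _
  exists_coe n := hc n ▸ exists_nearestGaussian_eq_coe _
  inv_eq n := by rw [iterate_gaussT_succ (hz n), hc n]; ring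

theorem stmt6 (ζ : ℂ) (hζ : ¬ IsGaussianRational ζ)
    (c : ℕ → ℂ) (hc0 : c 0 = nearestGaussian ζ)
    (z : ℂ) (hz : z = ζ - c 0)
    (hc : ∀ n : ℕ, c (n + 1) = nearestGaussian (gaussT^[n] z)⁻¹) :
    (∀ n : ℕ, gaussT^[n] z ≠ 0) ∧
    ∀ n : ℕ, 1 ≤ n →
      contDen c (n + 1) ≠ 0 ∧
      (2 / (2 + Real.sqrt 2)) *
          (1 / (‖contDen c (n + 1)‖ ^ 2 *
            (‖c (n + 1)‖ + Real.sqrt 2 / 2)))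
        ≤ ‖ζ - contNum c (n + 1) / contDen c (n + 1)‖ ∧
      ‖ζ - contNum c (n + 1) / contDen c (n + 1)‖
        ≤ (4 / (2 - Real.sqrt 2)) *
            (1 / (‖c (n + 1)‖ * ‖contDen c (n + 1)‖ ^ 2)) := by
  rw [hc0] at hz
  obtain ⟨g, hg⟩ := exists_nearestGaussian_eq_coe ζ
  have hirr : ¬IsGaussianRational z := fun hrat => hζ (by simpa [hz, hg] using hrat.add_coe g)
  have hx : IsHurwitzExpansion (fun n => gaussT^[n] z) c :=
    isHurwitzExpansion_iterate_gaussT (hz ▸ abs_re_sub_nearestGaussian_le ζ)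
      (hz ▸ abs_im_sub_nearestGaussian_le ζ) (iterate_gaussT_ne_zero hirr) hc
  have hζc : ζ = c 0 + gaussT^[0] z := by rw [Function.iterate_zero_apply, hz, hc0]; ring
  exact ⟨iterate_gaussT_ne_zero hirr, fun n _ => ⟨hx.contDen_ne_zero n,
    hx.le_norm_sub_contNum_div_contDen hζc n, hx.norm_sub_contNum_div_contDen_le hζc n⟩⟩
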